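/- arXiv:math/0509714 — 2 statements merged into one kernel-verified Lean document; each statement's English description precedes it below -/
import Mathlib

section
/- Let $p,k,l \geq 2$ be integers. Define $Q(k,l) = \{-k+2,-k+4,\ldots,k-2\} \times \{-l+2,\ldots,l-2\} \subset \mathbb{Z}^2$, $R(p,k,l) = \bigcup_{i_3=1}^{p} \big(Q(k,l) + (p+1-2i_3)\cdot(-\tfrac12,-\tfrac12)\big)$ viewed inside $(\tfrac12\mathbb{Z})^2$, and $T(p,k,l) = \big(R(p,k,l)+(\tfrac12,-\tfrac12)\big) \cup \big(R(p,k,l)+(-\tfrac12,\tfrac12)\big)$. Then the cardinality of $T(p,k,l)$ equals $2(k-1)(l-1) + (p-1)(k+l-2)$. -/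
/-!
Translating by `(k + p/2, l + p/2)` identifies `T(p,k,l)` with the sumset `G + S_p ⊆ ℤ²` of the
grid `G = {(2s, 2t) : 1 ≤ s ≤ k-1, 1 ≤ t ≤ l-1}` and the staircase
`S_p = {(i, i-1), (i-1, i) : 1 ≤ i ≤ p}`; the two shifts `(±1/2, ∓1/2)` become the two kinds of
staircase points. For `p = 1` this is two translates of `G` of opposite parity. Passing from `p`
to `p + 1` adds `G + (p+1, p)` and `G + (p, p+1)`, which are covered by `G + (p-1, p)` and
`G + (p, p-1)` except for one new column of `l - 1` points and one new row of `k - 1` points,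
both outside the bounding box of `G + S_p`.
-/

open Finset Pointwise

namespace SteinChernClasses

noncomputable def evenGrid (k l : ℤ) : Finset (ℤ × ℤ) :=
  (Icc 1 (k - 1) ×ˢ Icc 1 (l - 1)).image fun st => (2 * st.1, 2 * st.2)

noncomputable def staircase (p : ℤ) : Finset (ℤ × ℤ) :=
  (Icc 1 p).biUnion fun i => {(i, i - 1), (i - 1, i)}

lemma mem_evenGrid_add_staircase {k l p X Y : ℤ} :
    (X, Y) ∈ evenGrid k l + staircase p ↔
      ∃ s ∈ Icc 1 (k - 1), ∃ t ∈ Icc 1 (l - 1), ∃ i ∈ Icc 1 p,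
        (X = 2 * s + i ∧ Y = 2 * t + i - 1) ∨ (X = 2 * s + i - 1 ∧ Y = 2 * t + i) := by
  simp only [evenGrid, staircase, mem_add, mem_image, mem_biUnion, mem_product, mem_insert,
    mem_singleton, Prod.exists, Prod.ext_iff, Prod.fst_add, Prod.snd_add]
  constructor
  · rintro ⟨_, _, ⟨s, t, ⟨hs, ht⟩, rfl, rfl⟩, _, _, ⟨_, hi, ⟨rfl, rfl⟩ | ⟨rfl, rfl⟩⟩, rfl, rfl⟩
    · exact ⟨s, hs, t, ht, _, hi, Or.inl ⟨rfl, by ring⟩⟩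
    · exact ⟨s, hs, t, ht, _, hi, Or.inr ⟨by ring, rfl⟩⟩
  · rintro ⟨s, hs, t, ht, i, hi, ⟨rfl, rfl⟩ | ⟨rfl, rfl⟩⟩
    · exact ⟨_, _, ⟨s, t, ⟨hs, ht⟩, rfl, rfl⟩, _, _, ⟨i, hi, Or.inl ⟨rfl, rfl⟩⟩, rfl, by ring⟩
    · exact ⟨_, _, ⟨s, t, ⟨hs, ht⟩, rfl, rfl⟩, _, _, ⟨i, hi, Or.inr ⟨rfl, rfl⟩⟩, by ring, rfl⟩

lemma card_evenGrid (k l : ℤ) : #(evenGrid k l) = (k - 1).toNat * (l - 1).toNat := by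
  have hinj : Function.Injective fun st : ℤ × ℤ => (2 * st.1, 2 * st.2) := by
    rintro ⟨s, t⟩ ⟨s', t'⟩ h
    simp only [Prod.mk.injEq] at h ⊢
    omega
  rw [evenGrid, card_image_of_injective _ hinj, card_product, Int.card_Icc, Int.card_Icc]
  simp

lemma card_evenGrid_add_staircase_one (k l : ℤ) :
    #(evenGrid k l + staircase 1) = 2 * ((k - 1).toNat * (l - 1).toNat) := by
  have hstair : staircase 1 = {(1, 0)} ∪ {(0, 1)} := by
    ext; simp [staircase, or_comm]
  have hdisj : Disjoint (evenGrid k l + {(1, 0)}) (evenGrid k l + {(0, 1)}) := by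
    simp only [disjoint_left, evenGrid, mem_add, mem_singleton, mem_image]
    rintro _ ⟨_, ⟨⟨s, t⟩, -, rfl⟩, _, rfl, rfl⟩ ⟨_, ⟨⟨s', t'⟩, -, rfl⟩, _, rfl, h⟩
    simp only [Prod.mk_add_mk, Prod.mk.injEq] at h
    omega
  rw [hstair, add_union, card_union_of_disjoint hdisj, card_add_singleton, card_add_singleton,
    card_evenGrid, two_mul]

noncomputable def topRow (k l p : ℤ) : Finset (ℤ × ℤ) :=
  (Icc 1 (k - 1)).image fun s => (2 * s + p, 2 * l + p - 1)

noncomputable def rightColumn (k l p : ℤ) : Finset (ℤ × ℤ) :=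
  (Icc 1 (l - 1)).image fun t => (2 * k + p - 1, 2 * t + p)

lemma evenGrid_add_staircase_succ {k l p : ℤ} (hk : 2 ≤ k) (hl : 2 ≤ l) (hp : 1 ≤ p) :
    evenGrid k l + staircase (p + 1) =
      (evenGrid k l + staircase p) ∪ topRow k l p ∪ rightColumn k l p := by
  ext ⟨X, Y⟩
  simp only [mem_union, mem_evenGrid_add_staircase, topRow, rightColumn, mem_image, mem_Icc,
    Prod.mk.injEq]
  constructor
  · rintro ⟨s, hs, t, ht, i, hi, h⟩
    by_cases hip : i ≤ p
    · exact Or.inl (Or.inl ⟨s, hs, t, ht, i, ⟨hi.1, hip⟩, h⟩)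
    rcases h with ⟨rfl, rfl⟩ | ⟨rfl, rfl⟩
    · by_cases hsk : s = k - 1
      · exact Or.inr ⟨t, ht, by omega, by omega⟩
      · exact Or.inl (Or.inl ⟨s + 1, by omega, t, ht, p, by omega, Or.inr ⟨by omega, by omega⟩⟩)
    · by_cases htl : t = l - 1
      · exact Or.inl (Or.inr ⟨s, hs, by omega, by omega⟩)
      · exact Or.inl (Or.inl ⟨s, hs, t + 1, by omega, p, by omega, Or.inl ⟨by omega, by omega⟩⟩)
  · rintro ((⟨s, hs, t, ht, i, hi, h⟩ | ⟨s, hs, rfl, rfl⟩) | ⟨t, ht, rfl, rfl⟩)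
    · exact ⟨s, hs, t, ht, i, ⟨hi.1, by omega⟩, h⟩
    · exact ⟨s, hs, l - 1, by omega, p + 1, by omega, Or.inr ⟨by omega, by omega⟩⟩
    · exact ⟨k - 1, by omega, t, ht, p + 1, by omega, Or.inl ⟨by omega, by omega⟩⟩

lemma card_topRow (k l p : ℤ) : #(topRow k l p) = (k - 1).toNat := by
  rw [topRow, card_image_of_injective _ fun s s' h => by simp only [Prod.mk.injEq] at h; omega,
    Int.card_Icc, add_sub_cancel_right]

lemma card_rightColumn (k l p : ℤ) : #(rightColumn k l p) = (l - 1).toNat := by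
  rw [rightColumn,
    card_image_of_injective _ fun t t' h => by simp only [Prod.mk.injEq] at h; omega,
    Int.card_Icc, add_sub_cancel_right]

lemma card_evenGrid_add_staircase_succ {k l p : ℤ} (hk : 2 ≤ k) (hl : 2 ≤ l) (hp : 1 ≤ p) :
    #(evenGrid k l + staircase (p + 1)) =
      #(evenGrid k l + staircase p) + (k - 1).toNat + (l - 1).toNat := by
  have htop : Disjoint (evenGrid k l + staircase p) (topRow k l p) := by
    rw [disjoint_left]
    rintro ⟨X, Y⟩ h h'
    rw [mem_evenGrid_add_staircase] at h
    simp only [topRow, mem_image, mem_Icc, Prod.mk.injEq] at h h'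
    omega
  have hright : Disjoint (evenGrid k l + staircase p ∪ topRow k l p) (rightColumn k l p) := by
    rw [disjoint_left]
    rintro ⟨X, Y⟩ h h'
    rw [mem_union, mem_evenGrid_add_staircase] at h
    simp only [topRow, rightColumn, mem_image, mem_Icc, Prod.mk.injEq] at h h'
    omega
  rw [evenGrid_add_staircase_succ hk hl hp, card_union_of_disjoint hright,
    card_union_of_disjoint htop, card_topRow, card_rightColumn]

theorem card_evenGrid_add_staircase {k l p : ℤ} (hk : 2 ≤ k) (hl : 2 ≤ l) (hp : 1 ≤ p) :
    (#(evenGrid k l + staircase p) : ℤ) = 2 * (k - 1) * (l - 1) + (p - 1) * (k + l - 2) := by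
  induction p, hp using Int.leInduction with
  | base =>
    rw [card_evenGrid_add_staircase_one]
    push_cast
    rw [Int.toNat_of_nonneg (by omega), Int.toNat_of_nonneg (by omega)]
    ring
  | succ p hp ih =>
    rw [card_evenGrid_add_staircase_succ hk hl hp]
    push_cast
    rw [ih, Int.toNat_of_nonneg (by omega), Int.toNat_of_nonneg (by omega)]
    ring

lemma shifts_eq_image (p k l : ℤ) :
    let Q : Finset (ℚ × ℚ) :=
      ((Icc (1 : ℤ) (k - 1)).image (fun i => ((-k + 2 * i : ℤ) : ℚ))) ×ˢ
      ((Icc (1 : ℤ) (l - 1)).image (fun i => ((-l + 2 * i : ℤ) : ℚ)))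
    let R : Finset (ℚ × ℚ) :=
      (Icc (1 : ℤ) p).biUnion (fun i =>
        Q.image (fun q =>
          (q.1 + ((p + 1 - 2 * i : ℤ) : ℚ) * (-1/2),
           q.2 + ((p + 1 - 2 * i : ℤ) : ℚ) * (-1/2))))
    (R.image (fun q => (q.1 + 1/2, q.2 - 1/2))) ∪ (R.image (fun q => (q.1 - 1/2, q.2 + 1/2))) =
      (evenGrid k l + staircase p).image
        fun z => ((z.1 : ℚ) - (k + p / 2), (z.2 : ℚ) - (l + p / 2)) := by
  intro Q R
  ext ⟨u, v⟩
  simp only [Q, R, mem_union, mem_image, mem_biUnion, mem_product, Prod.exists, Prod.mk.injEq,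
    mem_evenGrid_add_staircase]
  constructor
  · rintro (⟨_, _, ⟨i, hi, _, _, ⟨⟨s, hs, rfl⟩, ⟨t, ht, rfl⟩⟩, rfl, rfl⟩, rfl, rfl⟩ |
      ⟨_, _, ⟨i, hi, _, _, ⟨⟨s, hs, rfl⟩, ⟨t, ht, rfl⟩⟩, rfl, rfl⟩, rfl, rfl⟩)
    · exact ⟨_, _, ⟨s, hs, t, ht, i, hi, Or.inl ⟨rfl, rfl⟩⟩,
        by push_cast; ring, by push_cast; ring⟩
    · exact ⟨_, _, ⟨s, hs, t, ht, i, hi, Or.inr ⟨rfl, rfl⟩⟩,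
        by push_cast; ring, by push_cast; ring⟩
  · rintro ⟨_, _, ⟨s, hs, t, ht, i, hi, ⟨rfl, rfl⟩ | ⟨rfl, rfl⟩⟩, rfl, rfl⟩
    · exact Or.inl ⟨_, _, ⟨i, hi, _, _, ⟨⟨s, hs, rfl⟩, ⟨t, ht, rfl⟩⟩, rfl, rfl⟩,
        by push_cast; ring, by push_cast; ring⟩
    · exact Or.inr ⟨_, _, ⟨i, hi, _, _, ⟨⟨s, hs, rfl⟩, ⟨t, ht, rfl⟩⟩, rfl, rfl⟩,
        by push_cast; ring, by push_cast; ring⟩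

end SteinChernClasses

/-- With `Q(k,l)` the rectangle of rotation numbers,
`R(p,k,l)` the union of `p` diagonal half-integer shifts of `Q(k,l)`, and `T(p,k,l)`
the union of the two shifts of `R(p,k,l)` by `(±1/2, ∓1/2)`, one has
`|T(p,k,l)| = 2(k-1)(l-1) + (p-1)(k+l-2)`. -/
theorem stmt_1 (p k l : ℤ) (hp : 2 ≤ p) (hk : 2 ≤ k) (hl : 2 ≤ l) :
    let Q : Finset (ℚ × ℚ) :=
      ((Finset.Icc (1 : ℤ) (k - 1)).image (fun i => ((-k + 2 * i : ℤ) : ℚ))) ×ˢ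
      ((Finset.Icc (1 : ℤ) (l - 1)).image (fun i => ((-l + 2 * i : ℤ) : ℚ)))
    let R : Finset (ℚ × ℚ) :=
      (Finset.Icc (1 : ℤ) p).biUnion (fun i =>
        Q.image (fun q =>
          (q.1 + ((p + 1 - 2 * i : ℤ) : ℚ) * (-1/2),
           q.2 + ((p + 1 - 2 * i : ℤ) : ℚ) * (-1/2))))
    let T : Finset (ℚ × ℚ) :=
      (R.image (fun q => (q.1 + 1/2, q.2 - 1/2))) ∪
      (R.image (fun q => (q.1 - 1/2, q.2 + 1/2)))
    T.card = (2 * (k - 1) * (l - 1) + (p - 1) * (k + l - 2)).toNat := by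
  intro Q R T
  have htranslate : Function.Injective
      fun z : ℤ × ℤ => ((z.1 : ℚ) - (k + p / 2), (z.2 : ℚ) - (l + p / 2)) := by
    rintro ⟨X, Y⟩ ⟨X', Y'⟩ h
    simp_all only [Prod.mk.injEq, sub_left_inj, Int.cast_inj]
  have hcard := SteinChernClasses.card_evenGrid_add_staircase hk hl (by omega : 1 ≤ p)
  rw [show T = _ from SteinChernClasses.shifts_eq_image p k l,
    card_image_of_injective _ htranslate]
  omega
end

section
/- Define the negative continued fraction $[a_0, \ldots, a_k]$ as above with all $a_j \geq 2$ integers. If $-\frac{\alpha}{\beta+\alpha} = [a_0, a_1, \ldots, a_k]$ where $\frac{\beta}{\alpha} \in (-1,0)$ is in lowest terms with $\alpha > 0$, and $\alpha', \beta'$ are integers satisfying $\alpha'\beta - \alpha\beta' = 1$ with $0 < \alpha' < \alpha$, then $-\frac{\beta+\alpha}{\beta'+\alpha'} = [a_k, a_{k-1}, \ldots, a_1]$ provided $k \geq 1$. -/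
/-- The negative (Hirzebruch–Jung) continued fraction
`[a₀, a₁, …, a_k] = -a₀ - 1/(-a₁ - 1/(⋯ - 1/(-a_k)))`. -/
def ncf : List ℤ → ℚ
  | [] => 0
  | [a] => (-a : ℤ)
  | a :: b :: L => -(a : ℚ) - 1 / ncf (b :: L)

/-!
Write `K(a₀, …, a_k)` for the continuant, so that `[a₀, …, a_k] = -K(a₀, …, a_k) / K(a₁, …, a_k)`.
The continuants are the entries of the product of the matrices `!![aᵢ, -1; 1, 0]`: its determinant
`1` gives `K(a₀..a_{k-1}) K(a₁..a_k) - K(a₀..a_k) K(a₁..a_{k-1}) = 1`, and the conjugation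
`Mᵀ = J M J` of each factor gives invariance of `K` under reversal. Since `aᵢ ≥ 2`, comparing lowest
terms forces `α = K(a₀..a_k)` and `β + α = K(a₁..a_k)`; then `α'β - αβ' = 1` pins down `α'` modulo
`α`, so `0 < α' < α` forces `α' = K(a₀..a_{k-1})` and `β' + α' = K(a₁..a_{k-1})`. Reversing the
last two continuants gives `[a_k, …, a₁]`.
-/

open Matrix

/-- For `L = [a₀, …, a_k]` this is
`!![K(a₀..a_k), -K(a₀..a_{k-1}); K(a₁..a_k), -K(a₁..a_{k-1})]`. -/
def continuantMatrix (L : List ℤ) : Matrix (Fin 2) (Fin 2) ℤ :=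
  (L.map fun a => !![a, -1; 1, 0]).prod

def continuant (L : List ℤ) : ℤ := continuantMatrix L 0 0

@[simp]
lemma continuantMatrix_nil : continuantMatrix [] = 1 := rfl

@[simp]
lemma continuantMatrix_cons (a : ℤ) (L : List ℤ) :
    continuantMatrix (a :: L) = !![a, -1; 1, 0] * continuantMatrix L := rfl

lemma continuantMatrix_concat (L : List ℤ) (a : ℤ) :
    continuantMatrix (L ++ [a]) = continuantMatrix L * !![a, -1; 1, 0] := by
  simp [continuantMatrix]

lemma continuantMatrix_cons_zero (a : ℤ) (L : List ℤ) (j : Fin 2) :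
    continuantMatrix (a :: L) 0 j = a * continuantMatrix L 0 j - continuantMatrix L 1 j := by
  simp [Matrix.mul_apply, Fin.sum_univ_two, sub_eq_add_neg]

lemma continuantMatrix_cons_one (a : ℤ) (L : List ℤ) (j : Fin 2) :
    continuantMatrix (a :: L) 1 j = continuantMatrix L 0 j := by
  simp [Matrix.mul_apply, Fin.sum_univ_two]

lemma det_continuantMatrix (L : List ℤ) : (continuantMatrix L).det = 1 := by
  induction L with
  | nil => simp
  | cons a L ih => rw [continuantMatrix_cons, Matrix.det_mul, ih, Matrix.det_fin_two_of]; ring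

/-- Each factor satisfies `Mᵀ = J M J` with `J = diag(1, -1)`, and `J² = 1`. -/
lemma transpose_continuantMatrix (L : List ℤ) :
    (continuantMatrix L)ᵀ = !![1, 0; 0, -1] * continuantMatrix L.reverse * !![1, 0; 0, -1] := by
  have hJ : (!![1, 0; 0, -1] * !![1, 0; 0, -1] : Matrix (Fin 2) (Fin 2) ℤ) = 1 := by
    simp [Matrix.one_fin_two]
  induction L with
  | nil => simp [hJ]
  | cons a L ih =>
    have hstep : (!![a, -1; 1, 0] : Matrix (Fin 2) (Fin 2) ℤ)ᵀ =
        !![1, 0; 0, -1] * !![a, -1; 1, 0] * !![1, 0; 0, -1] := by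
      ext i j; fin_cases i <;> fin_cases j <;> simp
    rw [continuantMatrix_cons, Matrix.transpose_mul, ih, hstep, List.reverse_cons,
      continuantMatrix_concat]
    simp only [Matrix.mul_assoc]
    rw [← Matrix.mul_assoc !![1, 0; 0, -1] !![1, 0; 0, -1], hJ, Matrix.one_mul]

lemma continuant_reverse (L : List ℤ) : continuant L.reverse = continuant L := by
  have h := congrFun (congrFun (transpose_continuantMatrix L) 0) 0
  simp only [Matrix.transpose_apply, Matrix.mul_apply, Fin.sum_univ_two] at h
  simp only [continuant, h]
  simp

lemma continuantMatrix_one_zero {L : List ℤ} (hL : L ≠ []) :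
    continuantMatrix L 1 0 = continuant L.tail := by
  obtain ⟨a, L, rfl⟩ := List.exists_cons_of_ne_nil hL
  exact continuantMatrix_cons_one a L 0

lemma continuantMatrix_zero_one {L : List ℤ} (hL : L ≠ []) :
    continuantMatrix L 0 1 = -continuant L.dropLast := by
  have h := congrFun (congrFun (transpose_continuantMatrix L) 1) 0
  simp only [Matrix.transpose_apply, Matrix.mul_apply, Fin.sum_univ_two] at h
  rw [h, continuantMatrix_one_zero (List.reverse_ne_nil_iff.mpr hL), List.tail_reverse,
    continuant_reverse]
  simp

lemma continuantMatrix_one_one {L : List ℤ} (hL : L.tail ≠ []) :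
    continuantMatrix L 1 1 = -continuant L.tail.dropLast := by
  obtain ⟨a, L, rfl⟩ := List.exists_cons_of_ne_nil (List.ne_nil_of_tail_ne_nil hL)
  rw [List.tail_cons] at hL ⊢
  rw [continuantMatrix_cons_one, continuantMatrix_zero_one hL]

lemma continuant_cons (a : ℤ) {L : List ℤ} (hL : L ≠ []) :
    continuant (a :: L) = a * continuant L - continuant L.tail := by
  rw [continuant, continuantMatrix_cons_zero, continuantMatrix_one_zero hL]
  rfl

lemma continuant_dropLast_mul_sub {L : List ℤ} (hL : L.tail ≠ []) :
    continuant L.dropLast * continuant L.tail - continuant L * continuant L.tail.dropLast = 1 := by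
  have hL' : L ≠ [] := List.ne_nil_of_tail_ne_nil hL
  have h := det_continuantMatrix L
  rw [Matrix.det_fin_two, continuantMatrix_one_one hL, continuantMatrix_zero_one hL',
    continuantMatrix_one_zero hL'] at h
  unfold continuant at h ⊢
  linear_combination h

lemma continuantMatrix_one_zero_nonneg_and_lt {L : List ℤ} (h : ∀ a ∈ L, 2 ≤ a) :
    0 ≤ continuantMatrix L 1 0 ∧ continuantMatrix L 1 0 < continuantMatrix L 0 0 := by
  induction L with
  | nil => simp
  | cons a L ih =>
    obtain ⟨h0, h1⟩ := ih fun x hx => h x (List.mem_cons_of_mem a hx)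
    have ha : 2 ≤ a := h a List.mem_cons_self
    rw [continuantMatrix_cons_zero, continuantMatrix_cons_one]
    constructor <;> nlinarith

lemma continuant_pos {L : List ℤ} (h : ∀ a ∈ L, 2 ≤ a) : 0 < continuant L :=
  (continuantMatrix_one_zero_nonneg_and_lt h).1.trans_lt (continuantMatrix_one_zero_nonneg_and_lt h).2

lemma continuant_tail_lt {L : List ℤ} (hL : L ≠ []) (h : ∀ a ∈ L, 2 ≤ a) :
    continuant L.tail < continuant L :=
  continuantMatrix_one_zero hL ▸ (continuantMatrix_one_zero_nonneg_and_lt h).2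

lemma continuant_dropLast_lt {L : List ℤ} (hL : L ≠ []) (h : ∀ a ∈ L, 2 ≤ a) :
    continuant L.dropLast < continuant L := by
  rw [← continuant_reverse L, ← continuant_reverse L.dropLast, ← List.tail_reverse]
  exact continuant_tail_lt (List.reverse_ne_nil_iff.mpr hL) (by simpa using h)

lemma ncf_eq_neg_div_continuant : ∀ {L : List ℤ}, L ≠ [] → (∀ a ∈ L, 2 ≤ a) →
    ncf L = -((continuant L : ℚ) / continuant L.tail)
  | [a], _, _ => by simp [ncf, continuant]
  | a :: b :: M, _, h => by
    have h' : ∀ x ∈ b :: M, 2 ≤ x := fun x hx => h x (List.mem_cons_of_mem a hx)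
    have hpos : (0 : ℚ) < continuant (b :: M) := by exact_mod_cast continuant_pos h'
    rw [ncf, ncf_eq_neg_div_continuant (List.cons_ne_nil b M) h',
      continuant_cons a (List.cons_ne_nil b M), List.tail_cons, List.tail_cons]
    push_cast
    field_simp
    ring

lemma eq_of_mul_sub_mul_eq_one {α γ x y x' y' : ℤ} (h : x * γ - α * y = 1)
    (h' : x' * γ - α * y' = 1) (hx : |x - x'| < α) : x = x' ∧ y = y' := by
  have hcop : IsCoprime α γ := ⟨-y, x, by linear_combination h⟩
  have hdvd : α ∣ x - x' := hcop.dvd_of_dvd_mul_right ⟨y - y', by linear_combination h - h'⟩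
  obtain rfl : x = x' := sub_eq_zero.mp (Int.eq_zero_of_abs_lt_dvd hdvd hx)
  have hα : α ≠ 0 := ((abs_nonneg _).trans_lt hx).ne'
  refine ⟨rfl, ?_⟩
  have : α * (y - y') = 0 := by linear_combination h' - h
  linarith [(mul_eq_zero.mp this).resolve_left hα]

theorem stmt_7_general (L : List ℤ) (hlen : 2 ≤ L.length) (hent : ∀ a ∈ L, 2 ≤ a)
    (α β α' β' : ℤ) (hβ1 : -α < β)
    (hcop : IsCoprime α β)
    (hncf : -((α : ℚ) / ((β + α : ℤ) : ℚ)) = ncf L)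
    (hdet : α' * β - α * β' = 1) (hα'0 : 0 < α') (hα'α : α' < α) :
    -(((β + α : ℤ) : ℚ) / ((β' + α' : ℤ) : ℚ)) = ncf L.tail.reverse := by
  have htail : L.tail ≠ [] := by rw [← List.length_pos_iff, List.length_tail]; omega
  have hL : L ≠ [] := List.ne_nil_of_tail_ne_nil htail
  have hentT : ∀ a ∈ L.tail, 2 ≤ a := fun a ha => hent a (List.mem_of_mem_tail ha)
  have hentD : ∀ a ∈ L.dropLast, 2 ≤ a := fun a ha => hent a (List.dropLast_subset L ha)
  have hK := continuant_dropLast_mul_sub htail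
  obtain ⟨hαK, hγK⟩ : α = continuant L ∧ β + α = continuant L.tail := by
    rw [ncf_eq_neg_div_continuant hL hent, neg_inj] at hncf
    refine Rat.div_int_inj (by omega) (continuant_pos hentT) ?_ ?_ hncf
    · exact Int.isCoprime_iff_nat_coprime.mp (by simpa using hcop.add_mul_left_right 1)
    · exact Int.isCoprime_iff_nat_coprime.mp
        ⟨-continuant L.tail.dropLast, continuant L.dropLast, by linear_combination hK⟩
  rw [← hαK, ← hγK] at hK
  obtain ⟨-, hβ'⟩ := eq_of_mul_sub_mul_eq_one hK (x' := α') (y' := β' + α')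
    (by linear_combination hdet) (abs_lt.mpr ⟨by linarith [continuant_pos hentD],
      by linarith [continuant_dropLast_lt hL hent]⟩)
  rw [ncf_eq_neg_div_continuant (by simpa using htail) (by simpa using hentT),
    continuant_reverse, List.tail_reverse, continuant_reverse, hγK, hβ']

/-- If `-α/(β+α) = [a₀, a₁, …, a_k]` with all `aⱼ ≥ 2`, `k ≥ 1`,
`β/α ∈ (-1,0)` in lowest terms with `α > 0`, and `α', β'` satisfy `α'β - αβ' = 1` with
`0 < α' < α`, then `-(β+α)/(β'+α') = [a_k, …, a₁]`. -/
theorem stmt_7 (L : List ℤ) (hlen : 2 ≤ L.length) (hent : ∀ a ∈ L, 2 ≤ a)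
    (α β α' β' : ℤ) (hα : 0 < α) (hβ1 : -α < β) (hβ2 : β < 0)
    (hcop : IsCoprime α β)
    (hncf : -((α : ℚ) / ((β + α : ℤ) : ℚ)) = ncf L)
    (hdet : α' * β - α * β' = 1) (hα'0 : 0 < α') (hα'α : α' < α) :
    -(((β + α : ℤ) : ℚ) / ((β' + α' : ℤ) : ℚ)) = ncf L.tail.reverse :=
  stmt_7_general L hlen hent α β α' β' hβ1 hcop hncf hdet hα'0 hα'α
end
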